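/- arXiv:1607.01533 — 11 statements merged into one kernel-verified Lean document; each statement's English description precedes it below -/
import Mathlib

section
/- For every probability distribution p = (p_1, ..., p_n) with all p_i > 0 and ∑_{i=1}^n p_i = 1, and every ϖ ≥ 0, one has L(p, ϖ) ≥ ϖ (1 − ∑_{i=1}^n p_i^2), with equality (for ϖ > 0) if and only if p is the uniform distribution p_i = 1/n for all i. -/
/-- Lower bound on the message importance measure:
`L(p, ϖ) ≥ ϖ * (1 - ∑ i, (p i)^2)`, with equality (for `ϖ > 0`)
if and only if `p` is the uniform distribution. -/
theorem mim_lower_bound {n : ℕ} (p : Fin n → ℝ)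
    (hp : ∀ i, 0 < p i) (hsum : ∑ i, p i = 1)
    (ϖ : ℝ) (hϖ : 0 ≤ ϖ) :
    ϖ * (1 - ∑ i, (p i) ^ 2) ≤
      Real.log (∑ i, p i * Real.exp (ϖ * (1 - p i))) ∧
    (0 < ϖ →
      (Real.log (∑ i, p i * Real.exp (ϖ * (1 - p i))) =
          ϖ * (1 - ∑ i, (p i) ^ 2) ↔ ∀ i, p i = 1 / (n : ℝ))) := by
  classical
  have hn : 0 < n := by
    rcases Nat.eq_zero_or_pos n with h | h
    · subst h; simp at hsum
    · exact h
  have hne : Nonempty (Fin n) := Fin.pos_iff_nonempty.mp hn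
  have huniv : (Finset.univ : Finset (Fin n)).Nonempty := Finset.univ_nonempty
  set x : Fin n → ℝ := fun i => ϖ * (1 - p i) with hx
  have hSpos : 0 < ∑ i, p i * Real.exp (x i) :=
    Finset.sum_pos (fun i _ => mul_pos (hp i) (Real.exp_pos _)) huniv
  have hmean : ∑ i : Fin n, p i • x i = ϖ * (1 - ∑ i, (p i) ^ 2) := by
    have h1 : ∀ i : Fin n, p i • x i = ϖ * p i - ϖ * (p i) ^ 2 := by
      intro i; simp only [smul_eq_mul, hx]; ring
    rw [Finset.sum_congr rfl (fun i _ => h1 i), Finset.sum_sub_distrib,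
      ← Finset.mul_sum, ← Finset.mul_sum, hsum]
    ring
  have hjensen : Real.exp (∑ i : Fin n, p i • x i) ≤ ∑ i, p i • Real.exp (x i) :=
    convexOn_exp.map_sum_le (fun i _ => (hp i).le) hsum (fun i _ => Set.mem_univ _)
  have hsmul : (∑ i, p i • Real.exp (x i)) = ∑ i, p i * Real.exp (x i) := by
    simp [smul_eq_mul]
  constructor
  · rw [Real.le_log_iff_exp_le hSpos, ← hmean]
    exact hjensen.trans_eq hsmul
  · intro hϖpos
    constructor
    · intro heq
      have hSeq : (∑ i, p i * Real.exp (x i)) = Real.exp (∑ i : Fin n, p i • x i) := by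
        rw [hmean, ← heq, Real.exp_log hSpos]
      have := (strictConvexOn_exp.map_sum_eq_iff (fun i _ => hp i) hsum
        (fun i _ => Set.mem_univ _)).mp (by rw [hSeq.symm, hsmul])
      -- all x i equal to the mean
      have hxconst : ∀ i : Fin n, x i = ∑ j : Fin n, p j • x j := by
        intro i; exact this i (Finset.mem_univ i)
      have hpconst : ∀ i j : Fin n, p i = p j := by
        intro i j
        have : x i = x j := by rw [hxconst i, hxconst j]
        have := this
        simp only [hx] at this
        nlinarith [hϖpos]
      intro i
      have hsum' : ∑ j : Fin n, p i = 1 := by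
        rw [← hsum]; exact Finset.sum_congr rfl (fun j _ => hpconst i j)
      rw [Finset.sum_const, Finset.card_univ, Fintype.card_fin, nsmul_eq_mul] at hsum'
      field_simp
      linarith [hsum']
    · intro huni
      have hsq : ∑ i, (p i) ^ 2 = 1 / (n : ℝ) := by
        have hn' : (n : ℝ) ≠ 0 := Nat.cast_ne_zero.mpr hn.ne'
        rw [Finset.sum_congr rfl (fun i _ => by rw [huni i])]
        rw [Finset.sum_const, Finset.card_univ, Fintype.card_fin, nsmul_eq_mul]
        field_simp
      have hS : (∑ i, p i * Real.exp (x i)) = Real.exp (ϖ * (1 - 1 / (n : ℝ))) := by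
        have hn' : (n : ℝ) ≠ 0 := Nat.cast_ne_zero.mpr hn.ne'
        have h1 : ∀ i : Fin n, p i * Real.exp (x i) =
            1 / (n : ℝ) * Real.exp (ϖ * (1 - 1 / (n : ℝ))) := by
          intro i; simp only [hx]; rw [huni i]
        rw [Finset.sum_congr rfl (fun i _ => h1 i),
          Finset.sum_const, Finset.card_univ, Fintype.card_fin, nsmul_eq_mul]
        field_simp
      rw [hS, Real.log_exp, hsq]
end

section
/- Let p = (p_1, ..., p_n) be a probability distribution with all p_i > 0 and ∑ p_i = 1, and let ϖ ≥ 0 satisfy ϖ · max_i p_i < 2. Then the message importance measure is maximized by the uniform distribution: L(p, ϖ) ≤ L(u, ϖ) = ϖ (1 − 1/n), where u = (1/n, ..., 1/n). -/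
/-!
Since `p * exp (ϖ * (1 - p)) = exp ϖ * f p` with `f x = x * exp (-(ϖ * x))`, the claim is Jensen's
inequality `∑ f (p i) ≤ n * f (1 / n)`; and `f` is concave where `ϖ * x ≤ 2`, because
`f'' x = ϖ * (ϖ * x - 2) * exp (-(ϖ * x))`.
-/

open Real Finset

theorem ConcaveOn.sum_le_card_mul_map_average {ι E : Type*} [Fintype ι] [Nonempty ι]
    [AddCommGroup E] [Module ℝ E] {s : Set E} {f : E → ℝ} (hf : ConcaveOn ℝ s f)
    {p : ι → E} (hp : ∀ i, p i ∈ s) :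
    ∑ i, f (p i) ≤ Fintype.card ι * f ((Fintype.card ι : ℝ)⁻¹ • ∑ i, p i) := by
  have hcard : (0 : ℝ) < Fintype.card ι := Nat.cast_pos.mpr Fintype.card_pos
  have hjensen := hf.le_map_sum (t := univ) (w := fun _ => (Fintype.card ι : ℝ)⁻¹)
    (fun _ _ => by positivity) (by simp [hcard.ne']) (fun i _ => hp i)
  rw [← smul_sum, ← smul_sum, smul_eq_mul] at hjensen
  rwa [inv_mul_le_iff₀ hcard] at hjensen

theorem hasDerivAt_exp_neg_mul (c x : ℝ) :
    HasDerivAt (fun x => exp (-(c * x))) (-c * exp (-(c * x))) x := by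
  simpa [mul_comm] using ((hasDerivAt_id x).const_mul c).neg.exp

theorem hasDerivAt_mul_exp_neg_mul (c x : ℝ) :
    HasDerivAt (fun x => x * exp (-(c * x))) ((1 - c * x) * exp (-(c * x))) x :=
  ((hasDerivAt_id' x).mul (hasDerivAt_exp_neg_mul c x)).congr_deriv (by ring)

theorem hasDerivAt_one_sub_mul_mul_exp_neg_mul (c x : ℝ) :
    HasDerivAt (fun x => (1 - c * x) * exp (-(c * x))) (c * (c * x - 2) * exp (-(c * x))) x :=
  ((((hasDerivAt_id' x).const_mul c).const_sub 1).mul (hasDerivAt_exp_neg_mul c x)).congr_deriv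
    (by ring)

theorem concaveOn_mul_exp_neg_mul {c : ℝ} (hc : 0 ≤ c) :
    ConcaveOn ℝ {x | c * x ≤ 2} (fun x => x * exp (-(c * x))) := by
  refine concaveOn_of_hasDerivWithinAt2_nonpos
    (convex_halfSpace_le (IsLinearMap.isLinearMap_smul c) 2)
    (fun x _ => (hasDerivAt_mul_exp_neg_mul c x).continuousAt.continuousWithinAt)
    (fun x _ => (hasDerivAt_mul_exp_neg_mul c x).hasDerivWithinAt)
    (fun x _ => (hasDerivAt_one_sub_mul_mul_exp_neg_mul c x).hasDerivWithinAt) ?_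
  intro x hx
  have hx : c * x ≤ 2 := interior_subset (s := {w : ℝ | c • w ≤ 2}) hx
  exact mul_nonpos_of_nonpos_of_nonneg (mul_nonpos_of_nonneg_of_nonpos hc (by linarith))
    (exp_pos _).le

theorem sum_mul_exp_mul_one_sub_le {ι : Type*} [Fintype ι] {p : ι → ℝ} (hsum : ∑ i, p i = 1)
    {ϖ : ℝ} (hϖ : 0 ≤ ϖ) (hp : ∀ i, ϖ * p i ≤ 2) :
    ∑ i, p i * exp (ϖ * (1 - p i)) ≤ exp (ϖ * (1 - 1 / Fintype.card ι)) := by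
  have : Nonempty ι := by
    by_contra h
    simp [not_nonempty_iff.mp h] at hsum
  have hcard : (0 : ℝ) < Fintype.card ι := Nat.cast_pos.mpr Fintype.card_pos
  have hjensen := (concaveOn_mul_exp_neg_mul hϖ).sum_le_card_mul_map_average (p := p) hp
  rw [hsum, smul_eq_mul, mul_one, mul_inv_cancel_left₀ hcard.ne'] at hjensen
  calc ∑ i, p i * exp (ϖ * (1 - p i)) = exp ϖ * ∑ i, p i * exp (-(ϖ * p i)) := by
        rw [mul_sum]
        refine sum_congr rfl fun i _ => ?_
        rw [mul_one_sub, sub_eq_add_neg, exp_add]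
        ring
    _ ≤ exp ϖ * exp (-(ϖ * (Fintype.card ι : ℝ)⁻¹)) := by gcongr
    _ = exp (ϖ * (1 - 1 / Fintype.card ι)) := by
        rw [← exp_add]
        ring_nf

/-- Maximum value property: if `ϖ * max_i p_i < 2`, the message importance
measure is maximized by the uniform distribution, i.e.
`L(p, ϖ) ≤ L(u, ϖ) = ϖ * (1 - 1/n)`. -/
theorem mim_max_uniform {n : ℕ} (hn : 0 < n) (p : Fin n → ℝ)
    (hp : ∀ i, 0 < p i) (hsum : ∑ i, p i = 1)
    (ϖ : ℝ) (hϖ : 0 ≤ ϖ)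
    (hmax : ϖ * (Finset.univ.sup' (Finset.univ_nonempty_iff.mpr
      (Fin.pos_iff_nonempty.mp hn)) p) < 2) :
    Real.log (∑ i, p i * Real.exp (ϖ * (1 - p i))) ≤ ϖ * (1 - 1 / (n : ℝ)) := by
  have hbound : ∀ i, ϖ * p i ≤ 2 := fun i =>
    (mul_le_mul_of_nonneg_left (le_sup' p (mem_univ i)) hϖ).trans hmax.le
  have hpos : 0 < ∑ i, p i * exp (ϖ * (1 - p i)) :=
    sum_pos (fun i _ => mul_pos (hp i) (exp_pos _)) (univ_nonempty_iff.mpr ⟨⟨0, hn⟩⟩)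
  have hbelow := sum_mul_exp_mul_one_sub_le hsum hϖ hbound
  rw [Fintype.card_fin] at hbelow
  exact (log_le_log hpos hbelow).trans_eq (log_exp _)
end

section
/- Let p = (p_1, ..., p_n) and q = (q_1, ..., q_n) be probability distributions with all entries positive, and let ϖ ≥ 0 satisfy ϖ · max_i max(p_i, q_i) < 2. Then for every α with 0 ≤ α ≤ 1, the message importance measure is concave: L(α p + (1 − α) q, ϖ) ≥ α L(p, ϖ) + (1 − α) L(q, ϖ). -/
/-!
The summand `x ↦ x * exp (ϖ * (1 - x))` has second derivative `ϖ * exp (ϖ * (1 - x)) * (ϖ * x - 2)`,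
so it is concave on the half-line `ϖ * x ≤ 2`. Hence the sum defining the message importance
measure is a concave positive function of the distribution, and the logarithm of a positive
concave function is concave because `log` is concave and increasing.
-/

open Real Set

noncomputable def messageImportance {ι : Type*} [Fintype ι] (ϖ : ℝ) (p : ι → ℝ) : ℝ :=
  log (∑ i, p i * exp (ϖ * (1 - p i)))

theorem ConcaveOn.sum_comp_apply {ι : Type*} [Fintype ι] {s : Set ℝ} {f : ℝ → ℝ}
    (hf : ConcaveOn ℝ s f) : ConcaveOn ℝ (univ.pi fun _ : ι => s) (fun v => ∑ i, f (v i)) := by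
  refine ⟨convex_pi fun _ _ => hf.1, fun v hv w hw a b ha hb hab => ?_⟩
  rw [mem_univ_pi] at hv hw
  simp only [smul_eq_mul, Finset.mul_sum, ← Finset.sum_add_distrib, Pi.add_apply, Pi.smul_apply]
  exact Finset.sum_le_sum fun i _ => hf.2 (hv i) (hw i) ha hb hab

theorem ConcaveOn.log_comp {E : Type*} [AddCommMonoid E] [Module ℝ E] {s : Set E} {g : E → ℝ}
    (hg : ConcaveOn ℝ s g) (hpos : ∀ x ∈ s, 0 < g x) : ConcaveOn ℝ s (fun x => log (g x)) := by
  refine ⟨hg.1, fun x hx y hy a b ha hb hab => ?_⟩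
  have hmix : 0 < a • g x + b • g y := convex_Ioi (0 : ℝ) (hpos x hx) (hpos y hy) ha hb hab
  calc a • log (g x) + b • log (g y) ≤ log (a • g x + b • g y) :=
        strictConcaveOn_log_Ioi.concaveOn.2 (hpos x hx) (hpos y hy) ha hb hab
    _ ≤ log (g (a • x + b • y)) := log_le_log hmix (hg.2 hx hy ha hb hab)

theorem hasDerivAt_mul_exp_mul_one_sub (c x : ℝ) :
    HasDerivAt (fun y => y * exp (c * (1 - y))) (exp (c * (1 - x)) * (1 - c * x)) x :=
  ((hasDerivAt_id' x).mul (((hasDerivAt_id' x).const_sub 1).const_mul c).exp).congr_deriv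
    (by ring)

theorem hasDerivAt_exp_mul_one_sub_mul_one_sub (c x : ℝ) :
    HasDerivAt (fun y => exp (c * (1 - y)) * (1 - c * y)) (c * exp (c * (1 - x)) * (c * x - 2))
      x :=
  ((((hasDerivAt_id' x).const_sub 1).const_mul c).exp.mul
    (((hasDerivAt_id' x).const_mul c).const_sub 1)).congr_deriv (by ring)

theorem concaveOn_mul_exp_mul_one_sub {c : ℝ} (hc : 0 ≤ c) :
    ConcaveOn ℝ {x | c * x ≤ 2} (fun x => x * exp (c * (1 - x))) := by
  have hconv : Convex ℝ {x : ℝ | c * x ≤ 2} :=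
    convex_halfSpace_le ⟨fun x y => mul_add c x y, fun a x => mul_left_comm c a x⟩ 2
  refine concaveOn_of_hasDerivWithinAt2_nonpos hconv
    (fun x _ => (hasDerivAt_mul_exp_mul_one_sub c x).continuousAt.continuousWithinAt)
    (fun x _ => (hasDerivAt_mul_exp_mul_one_sub c x).hasDerivWithinAt)
    (fun x _ => (hasDerivAt_exp_mul_one_sub_mul_one_sub c x).hasDerivWithinAt) fun x hx => ?_
  have hcx : c * x - 2 ≤ 0 := sub_nonpos.2 (interior_subset hx : x ∈ {x | c * x ≤ 2})
  exact mul_nonpos_of_nonneg_of_nonpos (by positivity) hcx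

theorem concaveOn_messageImportance {ι : Type*} [Fintype ι] [Nonempty ι] {ϖ : ℝ} (hϖ : 0 ≤ ϖ) :
    ConcaveOn ℝ (univ.pi fun _ : ι => Ioi 0 ∩ {x | ϖ * x ≤ 2}) (messageImportance ϖ) := by
  have hsummand := (concaveOn_mul_exp_mul_one_sub hϖ).subset inter_subset_right
    ((convex_Ioi 0).inter (concaveOn_mul_exp_mul_one_sub hϖ).1)
  refine hsummand.sum_comp_apply.log_comp fun v hv => ?_
  rw [mem_univ_pi] at hv
  exact Finset.sum_pos (fun i _ => mul_pos (hv i).1 (exp_pos _)) Finset.univ_nonempty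

theorem mim_concave_general {n : ℕ} (hn : 0 < n) (p q : Fin n → ℝ)
    (hp : ∀ i, 0 < p i) (hq : ∀ i, 0 < q i)
    (ϖ : ℝ) (hϖ : 0 ≤ ϖ)
    (hmax : ϖ * (Finset.univ.sup' (Finset.univ_nonempty_iff.mpr
      (Fin.pos_iff_nonempty.mp hn)) (fun i => max (p i) (q i))) < 2)
    (α : ℝ) (hα0 : 0 ≤ α) (hα1 : α ≤ 1) :
    α * Real.log (∑ i, p i * Real.exp (ϖ * (1 - p i))) +
      (1 - α) * Real.log (∑ i, q i * Real.exp (ϖ * (1 - q i))) ≤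
    Real.log (∑ i, (α * p i + (1 - α) * q i) *
      Real.exp (ϖ * (1 - (α * p i + (1 - α) * q i)))) := by
  have := Fin.pos_iff_nonempty.mp hn
  have hbound : ∀ i, ϖ * max (p i) (q i) ≤ 2 := fun i =>
    (mul_le_mul_of_nonneg_left (Finset.le_sup' (fun i => max (p i) (q i)) (Finset.mem_univ i))
      hϖ).trans hmax.le
  have hpmem : p ∈ univ.pi fun _ => Ioi 0 ∩ {x | ϖ * x ≤ 2} := mem_univ_pi.2 fun i =>
    ⟨hp i, (mul_le_mul_of_nonneg_left (le_max_left _ _) hϖ).trans (hbound i)⟩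
  have hqmem : q ∈ univ.pi fun _ => Ioi 0 ∩ {x | ϖ * x ≤ 2} := mem_univ_pi.2 fun i =>
    ⟨hq i, (mul_le_mul_of_nonneg_left (le_max_right _ _) hϖ).trans (hbound i)⟩
  simpa [messageImportance] using
    (concaveOn_messageImportance hϖ).2 hpmem hqmem hα0 (sub_nonneg.2 hα1) (add_sub_cancel α 1)

/-- Concavity of the message importance measure: if
`ϖ * max_i max (p i) (q i) < 2`, then for all `0 ≤ α ≤ 1`,
`L(α p + (1-α) q, ϖ) ≥ α L(p, ϖ) + (1-α) L(q, ϖ)`. -/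
theorem mim_concave {n : ℕ} (hn : 0 < n) (p q : Fin n → ℝ)
    (hp : ∀ i, 0 < p i) (hq : ∀ i, 0 < q i)
    (hpsum : ∑ i, p i = 1) (hqsum : ∑ i, q i = 1)
    (ϖ : ℝ) (hϖ : 0 ≤ ϖ)
    (hmax : ϖ * (Finset.univ.sup' (Finset.univ_nonempty_iff.mpr
      (Fin.pos_iff_nonempty.mp hn)) (fun i => max (p i) (q i))) < 2)
    (α : ℝ) (hα0 : 0 ≤ α) (hα1 : α ≤ 1) :
    α * Real.log (∑ i, p i * Real.exp (ϖ * (1 - p i))) +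
      (1 - α) * Real.log (∑ i, q i * Real.exp (ϖ * (1 - q i))) ≤
    Real.log (∑ i, (α * p i + (1 - α) * q i) *
      Real.exp (ϖ * (1 - (α * p i + (1 - α) * q i)))) :=
  mim_concave_general hn p q hp hq ϖ hϖ hmax α hα0 hα1
end

section
/- Let p = (p_1, ..., p_n) and q = (q_1, ..., q_m) be probability distributions with all entries positive and strictly less than 1, and let ϖ > 0. Then the message importance measure of the product distribution pq = (p_i q_j)_{i,j} satisfies L(pq, ϖ) = log ∑_{i,j} p_i q_j exp(ϖ(1 − p_i q_j)) < L(p, ϖ) + L(q, ϖ), i.e., MIM is strictly subadditive over independent distributions. -/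
/-- Strict subadditivity of the message importance measure over independent
distributions: `L(pq, ϖ) < L(p, ϖ) + L(q, ϖ)` when all entries of `p` and `q`
lie in `(0, 1)` and `ϖ > 0`. -/
theorem mim_product_subadditive {n m : ℕ} (p : Fin n → ℝ) (q : Fin m → ℝ)
    (hp0 : ∀ i, 0 < p i) (hp1 : ∀ i, p i < 1)
    (hq0 : ∀ j, 0 < q j) (hq1 : ∀ j, q j < 1)
    (hpsum : ∑ i, p i = 1) (hqsum : ∑ j, q j = 1)
    (ϖ : ℝ) (hϖ : 0 < ϖ) :
    Real.log (∑ i, ∑ j, p i * q j * Real.exp (ϖ * (1 - p i * q j))) <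
      Real.log (∑ i, p i * Real.exp (ϖ * (1 - p i))) +
        Real.log (∑ j, q j * Real.exp (ϖ * (1 - q j))) := by
  have hn : Nonempty (Fin n) := by
    by_contra h
    rw [not_nonempty_iff] at h
    simp [Finset.sum_of_isEmpty] at hpsum
  have hm : Nonempty (Fin m) := by
    by_contra h
    rw [not_nonempty_iff] at h
    simp [Finset.sum_of_isEmpty] at hqsum
  set A := ∑ i, p i * Real.exp (ϖ * (1 - p i)) with hA
  set B := ∑ j, q j * Real.exp (ϖ * (1 - q j)) with hB
  have hApos : 0 < A := Finset.sum_pos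
    (fun i _ => mul_pos (hp0 i) (Real.exp_pos _)) Finset.univ_nonempty
  have hBpos : 0 < B := Finset.sum_pos
    (fun j _ => mul_pos (hq0 j) (Real.exp_pos _)) Finset.univ_nonempty
  have hSpos : 0 < ∑ i, ∑ j, p i * q j * Real.exp (ϖ * (1 - p i * q j)) :=
    Finset.sum_pos (fun i _ => Finset.sum_pos
      (fun j _ => mul_pos (mul_pos (hp0 i) (hq0 j)) (Real.exp_pos _))
      Finset.univ_nonempty) Finset.univ_nonempty
  rw [← Real.log_mul hApos.ne' hBpos.ne']
  apply Real.log_lt_log hSpos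
  have hexp : A * B = ∑ i, ∑ j,
      p i * q j * Real.exp (ϖ * ((1 - p i) + (1 - q j))) := by
    rw [hA, hB, Finset.sum_mul_sum]
    apply Finset.sum_congr rfl
    intro i _
    apply Finset.sum_congr rfl
    intro j _
    rw [mul_add, Real.exp_add]
    ring
  rw [hexp]
  apply Finset.sum_lt_sum_of_nonempty Finset.univ_nonempty
  intro i _
  apply Finset.sum_lt_sum_of_nonempty Finset.univ_nonempty
  intro j _
  apply mul_lt_mul_of_pos_left _ (mul_pos (hp0 i) (hq0 j))
  apply Real.exp_lt_exp.2
  apply mul_lt_mul_of_pos_left _ hϖ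
  nlinarith [mul_pos (sub_pos.2 (hp1 i)) (sub_pos.2 (hq1 j))]
end

section
/- For all real numbers a > 0, b > 0 with a + b ≤ 1 and every ϖ ≥ 0, a · exp(ϖ(1 − a)) + b · exp(ϖ(1 − b)) ≥ (a + b) · exp(ϖ(1 − a − b)). Consequently, splitting one event of a probability distribution into two sub-events (with probabilities summing to the original one) never decreases the message importance measure, and merging two events never increases it. -/
/-- Event decomposition inequality: splitting an event of probability `a + b`
into two sub-events of probabilities `a` and `b` never decreases the
corresponding contribution to the message importance measure. -/
theorem mim_split_event (a b ϖ : ℝ) (ha : 0 < a) (hb : 0 < b)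
    (hab : a + b ≤ 1) (hϖ : 0 ≤ ϖ) :
    (a + b) * Real.exp (ϖ * (1 - a - b)) ≤
      a * Real.exp (ϖ * (1 - a)) + b * Real.exp (ϖ * (1 - b)) := by
  have h1 : Real.exp (ϖ * (1 - a - b)) ≤ Real.exp (ϖ * (1 - a)) := by
    apply Real.exp_le_exp.mpr
    nlinarith
  have h2 : Real.exp (ϖ * (1 - a - b)) ≤ Real.exp (ϖ * (1 - b)) := by
    apply Real.exp_le_exp.mpr
    nlinarith
  nlinarith [Real.exp_pos (ϖ * (1 - a - b))]
end

section
/- Fix p_0 with 0 < p_0 < 1/2. There exists ϖ_0 > 0 such that for every ϖ ≥ ϖ_0, the binary message importance measure L((p, 1 − p), ϖ) = log( p · exp(ϖ(1 − p)) + (1 − p) · exp(ϖ p) ) is strictly decreasing as a function of p on the interval (p_0, 1/2]; in particular, for every p with p_0 < p < 1/2 and every ϖ ≥ ϖ_0, L((p, 1 − p), ϖ) > L((1/2, 1/2), ϖ) = ϖ/2. -/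
/-!
Writing `a = ϖ p` and `b = ϖ (1 - p)`, the derivative of the argument
`p e^b + (1 - p) e^a` of the logarithm is `e^a (b - 1) - e^b (a - 1)`. It is negative
as soon as `2 ≤ a < b`, because `t ↦ (t - 1) e^{-t}` decreases on `[2, ∞)`. Hence for
`ϖ ≥ 2 / p₀` the measure decreases on `(p₀, 1/2]`, down to its value `ϖ / 2` at `p = 1/2`.
-/

open Real Set

lemma strictAntiOn_sub_one_mul_exp_neg :
    StrictAntiOn (fun t : ℝ => (t - 1) * exp (-t)) (Ici 2) := by
  have hderiv (t : ℝ) : HasDerivAt (fun t : ℝ => (t - 1) * exp (-t)) ((2 - t) * exp (-t)) t := by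
    refine (((hasDerivAt_id t).sub_const 1).mul (hasDerivAt_neg t).exp).congr_deriv ?_
    simp only [id]
    ring
  refine strictAntiOn_of_deriv_neg (convex_Ici 2) (by fun_prop) fun t ht => ?_
  rw [interior_Ici, mem_Ioi] at ht
  rw [(hderiv t).deriv]
  exact mul_neg_of_neg_of_pos (by linarith) (exp_pos _)

lemma sub_one_mul_exp_lt_sub_one_mul_exp {a b : ℝ} (ha : 2 ≤ a) (hab : a < b) :
    (b - 1) * exp a < (a - 1) * exp b := by
  have h := strictAntiOn_sub_one_mul_exp_neg (mem_Ici.2 ha) (mem_Ici.2 (ha.trans hab.le)) hab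
  calc (b - 1) * exp a = (b - 1) * exp (-b) * exp (a + b) := by
        rw [mul_assoc, ← exp_add]; ring_nf
    _ < (a - 1) * exp (-a) * exp (a + b) := mul_lt_mul_of_pos_right h (exp_pos _)
    _ = (a - 1) * exp b := by
        rw [mul_assoc, ← exp_add]; ring_nf

/-- `exp L((p, 1 - p), ϖ)`. -/
noncomputable def expMIMBernoulli (ϖ p : ℝ) : ℝ :=
  p * exp (ϖ * (1 - p)) + (1 - p) * exp (ϖ * p)

namespace expMIMBernoulli

variable {ϖ p : ℝ}

lemma pos (hp : 0 < p) (hp1 : p ≤ 1) : 0 < expMIMBernoulli ϖ p :=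
  add_pos_of_pos_of_nonneg (by positivity) (mul_nonneg (by linarith) (exp_pos _).le)

lemma half : expMIMBernoulli ϖ (1 / 2) = exp (ϖ / 2) := by
  rw [expMIMBernoulli]
  ring_nf

lemma hasDerivAt (ϖ p : ℝ) :
    HasDerivAt (expMIMBernoulli ϖ)
      (exp (ϖ * p) * (ϖ * (1 - p) - 1) - exp (ϖ * (1 - p)) * (ϖ * p - 1)) p := by
  have h₁ := (hasDerivAt_id p).mul (((hasDerivAt_id p).const_sub 1).const_mul ϖ).exp
  have h₂ := ((hasDerivAt_id p).const_sub 1).mul ((hasDerivAt_id p).const_mul ϖ).exp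
  refine (h₁.add h₂).congr_deriv ?_
  simp only [id]
  ring

lemma strictAntiOn (hϖ : 0 < ϖ) : StrictAntiOn (expMIMBernoulli ϖ) (Icc (2 / ϖ) (1 / 2)) := by
  refine strictAntiOn_of_deriv_neg (convex_Icc _ _)
    (by unfold expMIMBernoulli; fun_prop) fun x hx => ?_
  rw [interior_Icc, mem_Ioo, div_lt_iff₀ hϖ] at hx
  rw [(hasDerivAt ϖ x).deriv, sub_neg, mul_comm, mul_comm (exp _)]
  exact sub_one_mul_exp_lt_sub_one_mul_exp (by linarith) (by nlinarith)

end expMIMBernoulli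

/-- For a Bernoulli distribution `(p, 1 - p)` with `p ∈ (p₀, 1/2)`, there
exists `ϖ₀ > 0` such that for all `ϖ ≥ ϖ₀` the binary message importance
measure is strictly decreasing in `p` on `(p₀, 1/2]`, and in particular
exceeds its value `ϖ/2` at the uniform distribution. -/
theorem mim_bernoulli_decreasing (p₀ : ℝ) (hp₀ : 0 < p₀) (hp₀' : p₀ < 1 / 2) :
    ∃ ϖ₀ : ℝ, 0 < ϖ₀ ∧ ∀ ϖ : ℝ, ϖ₀ ≤ ϖ →
      StrictAntiOn
        (fun p : ℝ => Real.log
          (p * Real.exp (ϖ * (1 - p)) + (1 - p) * Real.exp (ϖ * p)))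
        (Set.Ioc p₀ (1 / 2)) ∧
      ∀ p : ℝ, p₀ < p → p < 1 / 2 →
        ϖ / 2 < Real.log
          (p * Real.exp (ϖ * (1 - p)) + (1 - p) * Real.exp (ϖ * p)) := by
  refine ⟨2 / p₀, by positivity, fun ϖ hϖ => ?_⟩
  have hϖ_pos : 0 < ϖ := (div_pos two_pos hp₀).trans_le hϖ
  have hsub : Ioc p₀ (1 / 2) ⊆ Icc (2 / ϖ) (1 / 2) := fun p hp =>
    ⟨((div_le_iff₀ hϖ_pos).2 (by rwa [div_le_iff₀ hp₀, mul_comm] at hϖ)).trans hp.1.le, hp.2⟩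
  have hanti : StrictAntiOn (log ∘ expMIMBernoulli ϖ) (Ioc p₀ (1 / 2)) :=
    strictMonoOn_log.comp_strictAntiOn ((expMIMBernoulli.strictAntiOn hϖ_pos).mono hsub)
      fun p hp => expMIMBernoulli.pos (hp₀.trans hp.1) (by linarith [hp.2])
  refine ⟨hanti, fun p hp hp' => ?_⟩
  have h := hanti ⟨hp, hp'.le⟩ ⟨hp₀', le_rfl⟩ hp'
  rwa [Function.comp_apply, expMIMBernoulli.half, log_exp] at h
end

section
/- Let p = (p_1, ..., p_n) be a probability distribution with all p_i > 0, ∑ p_i = 1, which is not the uniform distribution (equivalently, min_i p_i < 1/n). Then there exists ϖ_0 > 0 such that for every ϖ ≥ ϖ_0, L(p, ϖ) > L(u, ϖ) = ϖ(1 − 1/n), where u = (1/n, ..., 1/n) is the uniform distribution. -/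
/-- For any non-uniform probability distribution `p` (i.e. some `p i < 1/n`)
with positive entries, there exists `ϖ₀ > 0` such that for every `ϖ ≥ ϖ₀`,
`L(p, ϖ) > L(u, ϖ) = ϖ * (1 - 1/n)`. -/
theorem mim_exceeds_uniform_eventually {n : ℕ} (p : Fin n → ℝ)
    (hp : ∀ i, 0 < p i) (hsum : ∑ i, p i = 1)
    (hne : ∃ i, p i < 1 / (n : ℝ)) :
    ∃ ϖ₀ : ℝ, 0 < ϖ₀ ∧ ∀ ϖ : ℝ, ϖ₀ ≤ ϖ →
      ϖ * (1 - 1 / (n : ℝ)) <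
        Real.log (∑ i, p i * Real.exp (ϖ * (1 - p i))) := by
  obtain ⟨j, hj⟩ := hne
  set c : ℝ := 1 / (n : ℝ) - p j with hc
  have hcpos : 0 < c := sub_pos.mpr hj
  set a : ℝ := -Real.log (p j) with ha
  refine ⟨max 1 ((a + 1) / c), lt_of_lt_of_le one_pos (le_max_left _ _), ?_⟩
  intro ϖ hϖ
  have hϖ2 : (a + 1) / c ≤ ϖ := le_trans (le_max_right _ _) hϖ
  have hterm : p j * Real.exp (ϖ * (1 - p j)) ≤ ∑ i, p i * Real.exp (ϖ * (1 - p i)) := by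
    apply Finset.single_le_sum (f := fun i => p i * Real.exp (ϖ * (1 - p i)))
    · intro i _
      exact mul_nonneg (hp i).le (Real.exp_pos _).le
    · exact Finset.mem_univ j
  have hpos : 0 < p j * Real.exp (ϖ * (1 - p j)) := mul_pos (hp j) (Real.exp_pos _)
  have hlog : Real.log (p j * Real.exp (ϖ * (1 - p j))) ≤
      Real.log (∑ i, p i * Real.exp (ϖ * (1 - p i))) :=
    Real.log_le_log hpos hterm
  rw [Real.log_mul (ne_of_gt (hp j)) (Real.exp_ne_zero _), Real.log_exp] at hlog
  have hac : a + 1 ≤ ϖ * c := by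
    rw [div_le_iff₀ hcpos] at hϖ2; linarith
  have hac' : -Real.log (p j) + 1 ≤ ϖ * (1 / (n : ℝ)) - ϖ * p j := by
    rw [ha, hc] at hac
    nlinarith [hac]
  have e1 : ϖ * (1 - 1 / (n : ℝ)) = ϖ - ϖ * (1 / (n : ℝ)) := by ring
  have e2 : ϖ * (1 - p j) = ϖ - ϖ * p j := by ring
  linarith
end

section
/- Let p = (p_1, ..., p_n) be a probability distribution with all p_i > 0, ∑ p_i = 1, and p_min := min_i p_i < 1/n (i.e., p is not uniform). Then the message importance measure is asymptotically linear in ϖ with slope 1 − p_min; precisely, lim_{ϖ → ∞} L(p, ϖ) / ( ϖ(1 − p_min) + log p_min ) = 1. -/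
/-!
Write `L(ϖ) = log ∑ pᵢ exp(ϖ(1 - pᵢ))`. For `ϖ ≥ 0` every exponent is at most `ϖ(1 - p_min)`, and
the weights sum to one, so `L(ϖ) ≤ ϖ(1 - p_min)`; keeping only the term of a minimising index gives
`L(ϖ) ≥ ϖ(1 - p_min) + log p_min`. Hence `L` differs from the denominator by a bounded amount, and
the denominator tends to `+∞` because `p_min < 1/n ≤ 1`.
-/

open Filter Real Finset

section WeightedExp

variable {ι : Type*} (s : Finset ι) {w f : ι → ℝ}

theorem log_sum_mul_exp_le (hw : ∀ i ∈ s, 0 < w i) (hsum : ∑ i ∈ s, w i = 1) {c : ℝ}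
    (hf : ∀ i ∈ s, f i ≤ c) : log (∑ i ∈ s, w i * exp (f i)) ≤ c := by
  have hs : s.Nonempty := nonempty_of_sum_ne_zero (hsum ▸ one_ne_zero)
  have hpos : 0 < ∑ i ∈ s, w i * exp (f i) :=
    sum_pos (fun i hi => mul_pos (hw i hi) (exp_pos _)) hs
  rw [log_le_iff_le_exp hpos]
  calc ∑ i ∈ s, w i * exp (f i)
      ≤ ∑ i ∈ s, w i * exp c :=
        sum_le_sum fun i hi => by gcongr; exacts [(hw i hi).le, hf i hi]
    _ = exp c := by rw [← sum_mul, hsum, one_mul]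

theorem log_add_le_log_sum_mul_exp (hw : ∀ i ∈ s, 0 ≤ w i) {j : ι} (hj : j ∈ s)
    (hwj : 0 < w j) : log (w j) + f j ≤ log (∑ i ∈ s, w i * exp (f i)) := by
  have hterm : w j * exp (f j) ≤ ∑ i ∈ s, w i * exp (f i) :=
    single_le_sum (fun i hi => mul_nonneg (hw i hi) (exp_pos _).le) hj
  rw [le_log_iff_exp_le (lt_of_lt_of_le (by positivity) hterm), exp_add, exp_log hwj]
  exact hterm

end WeightedExp

theorem tendsto_div_nhds_one_of_le_of_le_add {α : Type*} {l : Filter α} {d g : α → ℝ} (c : ℝ)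
    (hd : Tendsto d l atTop) (hlow : ∀ᶠ x in l, d x ≤ g x) (hup : ∀ᶠ x in l, g x ≤ d x + c) :
    Tendsto (fun x => g x / d x) l (nhds 1) := by
  have hbound : Tendsto (fun x => 1 + c / d x) l (nhds 1) := by
    simpa using tendsto_const_nhds.add (tendsto_const_nhds.div_atTop hd)
  refine tendsto_of_tendsto_of_tendsto_of_le_of_le' tendsto_const_nhds hbound ?_ ?_
  · filter_upwards [hlow, hd.eventually_gt_atTop 0] with x hx hdx
    rwa [le_div_iff₀ hdx, one_mul]
  · filter_upwards [hup, hd.eventually_gt_atTop 0] with x hx hdx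
    rwa [one_add_div hdx.ne', div_le_div_iff_of_pos_right hdx]

/-- Asymptotic linearity of the message importance measure: if
`pmin = min_i p_i < 1/n`, then `L(p, ϖ) / (ϖ (1 - pmin) + log pmin) → 1`
as `ϖ → ∞`. -/
theorem mim_asymptotic {n : ℕ} (p : Fin n → ℝ) (pmin : ℝ)
    (hp : ∀ i, 0 < p i) (hsum : ∑ i, p i = 1)
    (hmin : IsLeast (Set.range p) pmin)
    (hlt : pmin < 1 / (n : ℝ)) :
    Tendsto (fun ϖ : ℝ =>
        Real.log (∑ i, p i * Real.exp (ϖ * (1 - p i))) /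
          (ϖ * (1 - pmin) + Real.log pmin))
      atTop (nhds 1) := by
  obtain ⟨⟨i₀, rfl⟩, hle⟩ := hmin
  have hslope : 0 < 1 - p i₀ := by
    linarith [hlt.trans_le (one_div (n : ℝ) ▸ Nat.cast_inv_le_one n)]
  refine tendsto_div_nhds_one_of_le_of_le_add (-log (p i₀))
    (tendsto_atTop_add_const_right _ _ (tendsto_id.atTop_mul_const hslope)) ?_ ?_
  · refine Eventually.of_forall fun ϖ => ?_
    rw [add_comm]
    exact log_add_le_log_sum_mul_exp (f := fun i => ϖ * (1 - p i)) _ (fun i _ => (hp i).le)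
      (mem_univ i₀) (hp i₀)
  · filter_upwards [eventually_ge_atTop 0] with ϖ hϖ
    have hexp (i : Fin n) : ϖ * (1 - p i) ≤ ϖ * (1 - p i₀) := by
      gcongr
      exact hle (Set.mem_range_self i)
    linarith [log_sum_mul_exp_le _ (fun i _ => hp i) hsum fun i _ => hexp i]
end

section
/- (Theorem 1) Let p = (p_1, ..., p_n) with n > 2 be a probability distribution with all p_i > 0, ∑ p_i = 1, and p_min := min_i p_i < 1/n. If the importance coefficient satisfies ϖ ≥ − log(p_min) / (1/n − p_min), then L(p, ϖ) ≥ L(u, ϖ) = ϖ(1 − 1/n), where u = (1/n, ..., 1/n) is the uniform distribution. -/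
/-- Theorem 1: if `pmin = min_i p_i < 1/n` (with `n > 2`) and
`ϖ ≥ -log pmin / (1/n - pmin)`, then `L(p, ϖ) ≥ L(u, ϖ) = ϖ (1 - 1/n)`. -/
theorem mim_coefficient_selection {n : ℕ} (hn : 2 < n) (p : Fin n → ℝ)
    (pmin : ℝ) (hp : ∀ i, 0 < p i) (hsum : ∑ i, p i = 1)
    (hmin : IsLeast (Set.range p) pmin)
    (hlt : pmin < 1 / (n : ℝ))
    (ϖ : ℝ) (hϖ : -Real.log pmin / (1 / (n : ℝ) - pmin) ≤ ϖ) :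
    ϖ * (1 - 1 / (n : ℝ)) ≤
      Real.log (∑ i, p i * Real.exp (ϖ * (1 - p i))) := by
  obtain ⟨i0, hi0⟩ := hmin.1
  have hpmin_pos : 0 < pmin := hi0 ▸ hp i0
  have hterm_pos : 0 < pmin * Real.exp (ϖ * (1 - pmin)) :=
    mul_pos hpmin_pos (Real.exp_pos _)
  have hsingle : pmin * Real.exp (ϖ * (1 - pmin)) ≤
      ∑ i, p i * Real.exp (ϖ * (1 - p i)) := by
    rw [← hi0]
    exact Finset.single_le_sum (f := fun i => p i * Real.exp (ϖ * (1 - p i)))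
      (fun i _ => le_of_lt (mul_pos (hp i) (Real.exp_pos _)))
      (Finset.mem_univ i0)
  have hlog : Real.log (pmin * Real.exp (ϖ * (1 - pmin))) ≤
      Real.log (∑ i, p i * Real.exp (ϖ * (1 - p i))) :=
    Real.log_le_log hterm_pos hsingle
  rw [Real.log_mul (ne_of_gt hpmin_pos) (Real.exp_ne_zero _),
    Real.log_exp] at hlog
  refine le_trans ?_ hlog
  have hden : 0 < 1 / (n : ℝ) - pmin := by linarith
  have key : -Real.log pmin ≤ ϖ * (1 / (n : ℝ) - pmin) :=
    (div_le_iff₀ hden).mp hϖ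
  nlinarith [key]
end

section
/- (Theorem 2) Let p = (p_1, ..., p_n) with n > 2 be a probability distribution with all p_i > 0 and ∑ p_i = 1. For any index s such that p_s < 1/n, if the importance coefficient satisfies ϖ ≥ − log(p_s) / (1/n − p_s), then L(p, ϖ) ≥ L(u, ϖ) = ϖ(1 − 1/n), where u = (1/n, ..., 1/n) is the uniform distribution. -/
/-- Theorem 2: for any index `s` with `p s < 1/n` (with `n > 2`), if
`ϖ ≥ -log (p s) / (1/n - p s)`, then `L(p, ϖ) ≥ L(u, ϖ) = ϖ (1 - 1/n)`. -/
theorem mim_coefficient_selection_any_index {n : ℕ} (hn : 2 < n)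
    (p : Fin n → ℝ) (hp : ∀ i, 0 < p i) (hsum : ∑ i, p i = 1)
    (s : Fin n) (hs : p s < 1 / (n : ℝ))
    (ϖ : ℝ) (hϖ : -Real.log (p s) / (1 / (n : ℝ) - p s) ≤ ϖ) :
    ϖ * (1 - 1 / (n : ℝ)) ≤
      Real.log (∑ i, p i * Real.exp (ϖ * (1 - p i))) := by
  have hc : 0 < 1 / (n : ℝ) - p s := by linarith
  have hϖc : -Real.log (p s) ≤ ϖ * (1 / (n : ℝ) - p s) := (div_le_iff₀ hc).mp hϖ
  have hterm : Real.exp (ϖ * (1 - 1 / (n : ℝ))) ≤ p s * Real.exp (ϖ * (1 - p s)) := by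
    have h : p s * Real.exp (ϖ * (1 - p s))
        = Real.exp (Real.log (p s) + ϖ * (1 - p s)) := by
      rw [Real.exp_add, Real.exp_log (hp s)]
    rw [h]
    apply Real.exp_le_exp.mpr
    nlinarith [hϖc]
  have hsumge : p s * Real.exp (ϖ * (1 - p s)) ≤ ∑ i, p i * Real.exp (ϖ * (1 - p i)) :=
    Finset.single_le_sum (f := fun i => p i * Real.exp (ϖ * (1 - p i)))
      (fun i _ => mul_nonneg (hp i).le (Real.exp_pos _).le) (Finset.mem_univ s)
  calc ϖ * (1 - 1 / (n : ℝ)) = Real.log (Real.exp (ϖ * (1 - 1 / (n : ℝ)))) :=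
        (Real.log_exp _).symm
    _ ≤ _ := Real.log_le_log (Real.exp_pos _) (le_trans hterm hsumge)
end

section
/- (Theorem 3) Let p = (p_1, ..., p_n) with n > 2 be a probability distribution with all p_i > 0, ∑ p_i = 1, and with at least one index i such that p_i < 1/n. If the importance coefficient satisfies ϖ ≥ min over all indices i with p_i < 1/n of ( − log(p_i) / (1/n − p_i) ), then L(p, ϖ) ≥ L(u, ϖ) = ϖ(1 − 1/n), where u = (1/n, ..., 1/n) is the uniform distribution. -/
/-- Theorem 3: if `ϖ` is at least the minimum of `-log (p i) / (1/n - p i)`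
over all indices `i` with `p i < 1/n` (with `n > 2`), then
`L(p, ϖ) ≥ L(u, ϖ) = ϖ (1 - 1/n)`. -/
theorem mim_coefficient_selection_min {n : ℕ} (hn : 2 < n)
    (p : Fin n → ℝ) (hp : ∀ i, 0 < p i) (hsum : ∑ i, p i = 1)
    (hne : (Finset.univ.filter (fun i => p i < 1 / (n : ℝ))).Nonempty)
    (ϖ : ℝ)
    (hϖ : (Finset.univ.filter (fun i => p i < 1 / (n : ℝ))).inf' hne
        (fun i => -Real.log (p i) / (1 / (n : ℝ) - p i)) ≤ ϖ) :
    ϖ * (1 - 1 / (n : ℝ)) ≤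
      Real.log (∑ i, p i * Real.exp (ϖ * (1 - p i))) := by
  obtain ⟨j, hj, hjval⟩ := Finset.exists_mem_eq_inf' hne
      (fun i => -Real.log (p i) / (1 / (n : ℝ) - p i))
  rw [Finset.mem_filter] at hj
  have hjn : p j < 1 / (n : ℝ) := hj.2
  have hc : 0 < 1 / (n : ℝ) - p j := by linarith
  rw [hjval] at hϖ
  have h1 : -Real.log (p j) ≤ ϖ * (1 / (n : ℝ) - p j) := by
    rw [div_le_iff₀ hc] at hϖ; linarith
  have hterm : Real.exp (ϖ * (1 - 1 / (n : ℝ))) ≤ p j * Real.exp (ϖ * (1 - p j)) := by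
    have h2 : Real.exp (ϖ * (1 - 1 / (n : ℝ))) ≤
        Real.exp (Real.log (p j) + ϖ * (1 - p j)) := by
      apply Real.exp_le_exp.2; nlinarith
    rwa [Real.exp_add, Real.exp_log (hp j)] at h2
  have hsum' : p j * Real.exp (ϖ * (1 - p j)) ≤ ∑ i, p i * Real.exp (ϖ * (1 - p i)) :=
    Finset.single_le_sum (f := fun i => p i * Real.exp (ϖ * (1 - p i)))
      (fun i _ => mul_nonneg (hp i).le (Real.exp_nonneg _)) (Finset.mem_univ j)
  have hpos : 0 < ∑ i, p i * Real.exp (ϖ * (1 - p i)) :=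
    lt_of_lt_of_le (mul_pos (hp j) (Real.exp_pos _)) hsum'
  rw [Real.le_log_iff_exp_le hpos]
  linarith
end
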